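/- In the Hamming Hamster-Wheel setting with r ∈ [1, m−1], the r-modification D' of the Hamming Hamster-Wheel pseudo-distance is Hamming-inequality respecting: for all valuations v, w, x ∈ 𝒱, if |h(v,w)| < |h(v,x)| (as cardinals), then d'(v,w) ≺ d'(v,x). -/

import Mathlib

/-- `lt` is a strict total order on `C`. -/
def StrictTotalOrder' {C : Type*} (lt : C → C → Prop) : Prop :=
  (∀ c, ¬ lt c c) ∧ (∀ a b c, lt a b → lt b c → lt a c) ∧
  (∀ a b, a ≠ b → lt a b ∨ lt b a)

/-- The operator induced by a pseudo-distance `⟨C, lt, d⟩`. -/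
def inducedOp {𝒱 C : Type*} (lt : C → C → Prop) (d : 𝒱 → 𝒱 → C)
    (A B : Set 𝒱) : Set 𝒱 :=
  {w ∈ B | ∃ v ∈ A, ∀ v' ∈ A, ∀ w' ∈ B, lt (d v w) (d v' w') ∨ d v w = d v' w'}

/-- The set of atoms on which two valuations differ. -/
def hamSet {𝒜 T : Type*} (v w : 𝒜 → T) : Set 𝒜 := {p | v p ≠ w p}

open Classical in
/-- The valuation assigning `t1` to the atom `a0` and `t0` to every other atom. -/
noncomputable def unitVal {𝒜 T : Type*} (t0 t1 : T) (a0 : 𝒜) : 𝒜 → T :=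
  fun a => if a = a0 then t1 else t0

/-- The atoms `p 1, …, p m, q 1, …, q m` are `2m` pairwise distinct atoms. -/
def hamDistinctAtoms {𝒜 : Type*} (m : ℕ) (p q : ℕ → 𝒜) : Prop :=
  (∀ i ∈ Set.Icc 1 m, ∀ j ∈ Set.Icc 1 m, p i ≠ q j) ∧
  (∀ i ∈ Set.Icc 1 m, ∀ j ∈ Set.Icc 1 m, p i = p j → i = j) ∧
  (∀ i ∈ Set.Icc 1 m, ∀ j ∈ Set.Icc 1 m, q i = q j → i = j)

/-- `X = {v 1, …, v m, w 1, …, w m}`, where `v i = unitVal t0 t1 (p i)` and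
`w i = unitVal t0 t1 (q i)`. -/
noncomputable def hamX {𝒜 T : Type*} (m : ℕ) (p q : ℕ → 𝒜) (t0 t1 : T) : Set (𝒜 → T) :=
  {x | ∃ i ∈ Set.Icc 1 m, x = unitVal t0 t1 (p i) ∨ x = unitVal t0 t1 (q i)}

open Classical in
/-- The Hamming Hamster-Wheel pseudo-distance, with costs in `ℝ ∪ {∞}` (`WithTop ℝ`). -/
noncomputable def hamD {𝒜 T : Type*} (m : ℕ) (p q : ℕ → 𝒜) (t0 t1 : T)
    (a b : 𝒜 → T) : WithTop ℝ :=
  if a = b then 0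
  else if ({a, b} : Set (𝒜 → T)) ⊆ hamX m p q t0 t1 then
    (if (∃ i ∈ Set.Icc 1 m, ∃ j ∈ Set.Icc 1 m,
          a = unitVal t0 t1 (p i) ∧ b = unitVal t0 t1 (p j)) ∨
        (∃ i ∈ Set.Icc 1 m, ∃ j ∈ Set.Icc 1 m,
          a = unitVal t0 t1 (q i) ∧ b = unitVal t0 t1 (q j)) then ((2.1 : ℝ) : WithTop ℝ)
     else if ∃ i ∈ Set.Icc 1 m,
          ({a, b} : Set (𝒜 → T)) = {unitVal t0 t1 (p i), unitVal t0 t1 (q i)} then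
        ((2.4 : ℝ) : WithTop ℝ)
     else if ∃ i ∈ Set.Icc 1 m, ∃ j ∈ Set.Icc 1 m,
          ({a, b} : Set (𝒜 → T)) = {unitVal t0 t1 (p i), unitVal t0 t1 (q j)} ∧
          ((i : ℤ) - j).natAbs ∈ ({1, m - 1} : Set ℕ) then ((2.5 : ℝ) : WithTop ℝ)
     else ((2.2 : ℝ) : WithTop ℝ))
  else if (hamSet a b).Finite then
    (if (hamSet a b).ncard = 1 then ((1.4 : ℝ) : WithTop ℝ)
     else (((hamSet a b).ncard : ℝ) : WithTop ℝ))
  else ⊤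

open Classical in
/-- The modified Hamming Hamster-Wheel operator `|` on `𝒫(𝒱)`. -/
noncomputable def hamOp {𝒜 T : Type*} (m : ℕ) (p q : ℕ → 𝒜) (t0 t1 : T)
    (A B : Set (𝒜 → T)) : Set (𝒜 → T) :=
  if ∀ a ∈ A, ∀ b ∈ B, ({a, b} : Set (𝒜 → T)) ⊆ hamX m p q t0 t1 ∨
      (¬ (hamSet a b).Finite ∨ 3 ≤ (hamSet a b).ncard) then
    (if A ∩ hamX m p q t0 t1 = {unitVal t0 t1 (p m), unitVal t0 t1 (p 1)} ∧
        B ∩ hamX m p q t0 t1 = {unitVal t0 t1 (q m), unitVal t0 t1 (q 1)} then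
      {unitVal t0 t1 (q m)}
     else if A ∩ hamX m p q t0 t1 = {unitVal t0 t1 (q m), unitVal t0 t1 (q 1)} ∧
        B ∩ hamX m p q t0 t1 = {unitVal t0 t1 (p m), unitVal t0 t1 (p 1)} then
      {unitVal t0 t1 (p m)}
     else inducedOp (· < ·) (hamD m p q t0 t1) A B)
  else inducedOp (· < ·) (hamD m p q t0 t1) A B

open Classical in
/-- The `r`-modification `d'` of the Hamming Hamster-Wheel pseudo-distance. -/
noncomputable def hamD' {𝒜 T : Type*} (m : ℕ) (p q : ℕ → 𝒜) (t0 t1 : T) (r : ℕ)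
    (a b : 𝒜 → T) : WithTop ℝ :=
  if ∃ i ∈ Set.Icc (r + 1) m,
      ({a, b} : Set (𝒜 → T)) = {unitVal t0 t1 (p i), unitVal t0 t1 (q i)} then
    ((2.3 : ℝ) : WithTop ℝ)
  else hamD m p q t0 t1 a b

/-! The cost of a pair whose Hamming set has `n` elements lies in `[n, n + 1/2]`: it is `0` for
`n = 0`, `1.4` for `n = 1`, one of `2.1, …, 2.5` for two distinct members of `X` (which differ in
exactly the two atoms marking them; the `r`-modification only lowers some `2.4` to `2.3`), and `n`
otherwise, while an infinite Hamming set costs `∞`. These bands increase with `n`, and as all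
Hamming sets are countable, `|h(v,w)| < |h(v,x)|` makes `h(v,w)` finite and `h(v,x)` either
infinite or strictly larger as a natural number. -/

def costBand (n : ℕ) : Set (WithTop ℝ) := ((↑) : ℝ → WithTop ℝ) '' Set.Icc (n : ℝ) (n + 1 / 2)

lemma coe_mem_costBand {n : ℕ} {c : ℝ} (h₁ : (n : ℝ) ≤ c) (h₂ : c ≤ n + 1 / 2) :
    (c : WithTop ℝ) ∈ costBand n :=
  ⟨c, ⟨h₁, h₂⟩, rfl⟩

lemma lt_of_mem_costBand {n n' : ℕ} (hn : n < n') {c c' : WithTop ℝ}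
    (hc : c ∈ costBand n) (hc' : c' ∈ costBand n') : c < c' := by
  obtain ⟨c, ⟨-, hc⟩, rfl⟩ := hc
  obtain ⟨c', ⟨hc', -⟩, rfl⟩ := hc'
  have : (n : ℝ) + 1 ≤ n' := by exact_mod_cast hn
  exact WithTop.coe_lt_coe.2 (by linarith)

lemma lt_top_of_mem_costBand {n : ℕ} {c : WithTop ℝ} (hc : c ∈ costBand n) : c < ⊤ := by
  obtain ⟨c, -, rfl⟩ := hc
  exact WithTop.coe_lt_top c

section Hamming

variable {𝒜 T : Type*}

lemma hamSet_self (v : 𝒜 → T) : hamSet v v = ∅ := by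
  simp [hamSet]

lemma hamSet_unitVal_subset (t0 t1 : T) (a b : 𝒜) :
    hamSet (unitVal t0 t1 a) (unitVal t0 t1 b) ⊆ {a, b} := by
  intro s hs
  by_contra hab
  simp only [Set.mem_insert_iff, Set.mem_singleton_iff, not_or] at hab
  simp [hamSet, unitVal, hab.1, hab.2] at hs

lemma hamSet_unitVal {t0 t1 : T} (ht : t0 ≠ t1) {a b : 𝒜} (hab : a ≠ b) :
    hamSet (unitVal t0 t1 a) (unitVal t0 t1 b) = {a, b} := by
  refine (hamSet_unitVal_subset t0 t1 a b).antisymm ?_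
  rintro s (rfl | rfl)
  · simp [hamSet, unitVal, hab, ht.symm]
  · simp [hamSet, unitVal, hab.symm, ht]

lemma unitVal_injective {t0 t1 : T} (ht : t0 ≠ t1) :
    Function.Injective (unitVal (𝒜 := 𝒜) t0 t1) := by
  intro a b h
  by_contra hab
  simpa [unitVal, hab, ht.symm] using congrFun h a

variable {m : ℕ} {p q : ℕ → 𝒜} {t0 t1 : T} {a b : 𝒜 → T}

lemma exists_unitVal_of_mem_hamX (ha : a ∈ hamX m p q t0 t1) : ∃ s, a = unitVal t0 t1 s := by
  obtain ⟨i, -, h | h⟩ := ha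
  exacts [⟨p i, h⟩, ⟨q i, h⟩]

lemma finite_hamSet_of_mem_hamX (ha : a ∈ hamX m p q t0 t1) (hb : b ∈ hamX m p q t0 t1) :
    (hamSet a b).Finite := by
  obtain ⟨s, rfl⟩ := exists_unitVal_of_mem_hamX ha
  obtain ⟨s', rfl⟩ := exists_unitVal_of_mem_hamX hb
  exact (Set.toFinite {s, s'}).subset (hamSet_unitVal_subset t0 t1 s s')

lemma ncard_hamSet_of_mem_hamX (ht : t0 ≠ t1) (ha : a ∈ hamX m p q t0 t1)
    (hb : b ∈ hamX m p q t0 t1) (hab : a ≠ b) : (hamSet a b).ncard = 2 := by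
  obtain ⟨s, rfl⟩ := exists_unitVal_of_mem_hamX ha
  obtain ⟨s', rfl⟩ := exists_unitVal_of_mem_hamX hb
  have hss' : s ≠ s' := fun h ↦ hab (congrArg _ h)
  rw [hamSet_unitVal ht hss', Set.ncard_pair hss']

lemma pair_subset_hamX {i : ℕ} (hi : i ∈ Set.Icc 1 m)
    (h : ({a, b} : Set (𝒜 → T)) = {unitVal t0 t1 (p i), unitVal t0 t1 (q i)}) :
    ({a, b} : Set (𝒜 → T)) ⊆ hamX m p q t0 t1 := by
  rw [h]
  rintro _ (rfl | rfl)
  exacts [⟨i, hi, Or.inl rfl⟩, ⟨i, hi, Or.inr rfl⟩]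

lemma hamD_mem_costBand (ht : t0 ≠ t1) (hfin : (hamSet a b).Finite) :
    hamD m p q t0 t1 a b ∈ costBand (hamSet a b).ncard := by
  rcases eq_or_ne a b with rfl | hab
  · rw [hamD, if_pos rfl, hamSet_self, Set.ncard_empty]
    simpa using coe_mem_costBand (n := 0) le_rfl (by norm_num)
  by_cases hX : ({a, b} : Set (𝒜 → T)) ⊆ hamX m p q t0 t1
  · rw [hamD, if_neg hab, if_pos hX, ncard_hamSet_of_mem_hamX ht (hX (by simp)) (hX (by simp)) hab]
    split_ifs <;> exact coe_mem_costBand (by norm_num) (by norm_num)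
  · rw [hamD, if_neg hab, if_neg hX, if_pos hfin]
    split_ifs with h1
    · rw [h1]
      exact coe_mem_costBand (by norm_num) (by norm_num)
    · exact coe_mem_costBand le_rfl (by linarith)

lemma hamD'_mem_costBand (ht : t0 ≠ t1) (hdist : hamDistinctAtoms m p q) (r : ℕ)
    (hfin : (hamSet a b).Finite) :
    hamD' m p q t0 t1 r a b ∈ costBand (hamSet a b).ncard := by
  unfold hamD'
  split_ifs with h
  · obtain ⟨i, hi, hpair⟩ := h
    have hi' : i ∈ Set.Icc 1 m := ⟨le_add_self.trans hi.1, hi.2⟩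
    have hab : a ≠ b := by
      rintro rfl
      rcases Set.pair_eq_pair_iff.1 hpair.symm with ⟨hp, hq⟩ | ⟨hp, hq⟩ <;>
        exact hdist.1 i hi' i hi' (unitVal_injective ht (hp.trans hq.symm))
    have hX := pair_subset_hamX hi' hpair
    rw [ncard_hamSet_of_mem_hamX ht (hX (by simp)) (hX (by simp)) hab]
    exact coe_mem_costBand (by norm_num) (by norm_num)
  · exact hamD_mem_costBand ht hfin

lemma hamD'_eq_top (r : ℕ) (hinf : (hamSet a b).Infinite) : hamD' m p q t0 t1 r a b = ⊤ := by
  have hX : ¬ ({a, b} : Set (𝒜 → T)) ⊆ hamX m p q t0 t1 := fun hX ↦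
    hinf (finite_hamSet_of_mem_hamX (hX (by simp)) (hX (by simp)))
  have hab : a ≠ b := by
    rintro rfl
    simp [hamSet_self] at hinf
  rw [hamD', if_neg, hamD, if_neg hab, if_neg hX, if_neg hinf]
  rintro ⟨i, hi, hpair⟩
  exact hX (pair_subset_hamX ⟨le_add_self.trans hi.1, hi.2⟩ hpair)

end Hamming

lemma Set.finite_of_mk_lt_mk {α : Type*} [Countable α] {s t : Set α}
    (h : Cardinal.mk s < Cardinal.mk t) : s.Finite :=
  Set.finite_coe_iff.1 (Cardinal.mk_lt_aleph0_iff.1 (h.trans_le Cardinal.mk_le_aleph0))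

lemma Set.ncard_lt_ncard_of_mk_lt_mk {α : Type*} {s t : Set α} (ht : t.Finite)
    (h : Cardinal.mk s < Cardinal.mk t) : s.ncard < t.ncard :=
  Cardinal.toNat_lt_toNat h (Cardinal.mk_lt_aleph0_iff.2 ht.to_subtype)

theorem stmt11_general {𝒜 T : Type*} [Countable 𝒜]
    (t0 t1 : T) (ht : t0 ≠ t1)
    (m : ℕ) (p q : ℕ → 𝒜) (hdist : hamDistinctAtoms m p q)
    (r : ℕ) :
    ∀ v w x : 𝒜 → T, Cardinal.mk (hamSet v w) < Cardinal.mk (hamSet v x) →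
      hamD' m p q t0 t1 r v w < hamD' m p q t0 t1 r v x := by
  intro v w x hlt
  have hw := hamD'_mem_costBand ht hdist r (Set.finite_of_mk_lt_mk hlt)
  by_cases hx : (hamSet v x).Finite
  · exact lt_of_mem_costBand (Set.ncard_lt_ncard_of_mk_lt_mk hx hlt) hw
      (hamD'_mem_costBand ht hdist r hx)
  · rw [hamD'_eq_top r hx]
    exact lt_top_of_mem_costBand hw

/-- The `r`-modification of the Hamming Hamster-Wheel pseudo-distance is
Hamming-inequality respecting: if `|h(v,w)| < |h(v,x)|` as cardinals, then
`d'(v,w) ≺ d'(v,x)`. -/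
theorem stmt11 {𝒜 T : Type*} [Countable 𝒜] [Infinite 𝒜]
    (t0 t1 : T) (ht : t0 ≠ t1)
    (m : ℕ) (hm : 4 ≤ m) (p q : ℕ → 𝒜) (hdist : hamDistinctAtoms m p q)
    (r : ℕ) (hr : r ∈ Set.Icc 1 (m - 1)) :
    ∀ v w x : 𝒜 → T, Cardinal.mk (hamSet v w) < Cardinal.mk (hamSet v x) →
      hamD' m p q t0 t1 r v w < hamD' m p q t0 t1 r v x :=
  stmt11_general t0 t1 ht m p q hdist r
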